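/- Let G be a weighted directed graph and let s,t be vertices. Then d(s,t) = −∞ if and only if there exists a walk from s to t that visits some vertex lying on a negative cycle. In particular, if G has no negative cycle then d(s,t) > −∞ for all s,t. -/

import Mathlib

/-- A weighted directed graph: a finite vertex type `V`, an edge relation, and
real-valued edge lengths. -/
structure WDigraph (V : Type*) where
  Edge : V → V → Prop
  len : V → V → ℝ

namespace WDigraph

variable {V : Type*}

/-- `p` is a walk from `s` to `t`: a nonempty list of vertices starting at `s`,
ending at `t`, whose consecutive pairs are edges.  The one-vertex list `[s]` is
the empty walk from `s` to `s`. -/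
def IsWalk (G : WDigraph V) (s t : V) (p : List V) : Prop :=
  p ≠ [] ∧ p.head? = some s ∧ p.getLast? = some t ∧ p.Chain' G.Edge

/-- The length of a walk: the sum of the lengths of its edges, counted with
multiplicity (the empty walk has length 0). -/
noncomputable def walkLen (G : WDigraph V) (p : List V) : ℝ :=
  ((p.zip p.tail).map fun q => G.len q.1 q.2).sum

/-- The number of hops of a walk: its traversals of negative edges, counted
with multiplicity. -/
noncomputable def hops (G : WDigraph V) (p : List V) : ℕ :=
  ((p.zip p.tail).filter fun q => decide (G.len q.1 q.2 < 0)).length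

/-- The distance `d(s,t)`: the infimum in `ℝ ∪ {±∞}` of the lengths of all
walks from `s` to `t` (equal to `+∞` when no walk exists). -/
noncomputable def dist (G : WDigraph V) (s t : V) : EReal :=
  sInf {x : EReal | ∃ p, G.IsWalk s t p ∧ x = (G.walkLen p : EReal)}

/-- The `h`-hop distance `d^h(s,t)`: the infimum in `ℝ ∪ {±∞}` of the lengths
of walks from `s` to `t` with at most `h` hops. -/
noncomputable def hopDist (G : WDigraph V) (h : ℕ) (s t : V) : EReal :=
  sInf {x : EReal | ∃ p, G.IsWalk s t p ∧ G.hops p ≤ h ∧ x = (G.walkLen p : EReal)}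

/-- A negative cycle: a walk of negative length from a vertex to itself. -/
def HasNegCycle (G : WDigraph V) : Prop :=
  ∃ v p, G.IsWalk v v p ∧ G.walkLen p < 0

/-- Reweighting the graph by a potential `φ`:
`ℓ_φ(u,v) = φ(u) + ℓ(u,v) − φ(v)`. -/
noncomputable def reweight (G : WDigraph V) (φ : V → ℝ) : WDigraph V :=
  ⟨G.Edge, fun u v => φ u + G.len u v - φ v⟩

/-- A potential `φ` is valid if `ℓ_φ(e) ≥ 0` for every edge `e` with
`ℓ(e) ≥ 0`. -/
def Valid (G : WDigraph V) (φ : V → ℝ) : Prop :=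
  ∀ u v, G.Edge u v → 0 ≤ G.len u v → 0 ≤ φ u + G.len u v - φ v

end WDigraph

namespace WDigraph

variable {V : Type*} {G : WDigraph V}

@[simp] lemma walkLen_nil : G.walkLen [] = 0 := rfl

@[simp] lemma walkLen_single (a : V) : G.walkLen [a] = 0 := rfl

@[simp] lemma walkLen_cons_cons (a b : V) (l : List V) :
    G.walkLen (a :: b :: l) = G.len a b + G.walkLen (b :: l) := by
  simp [walkLen, List.zip]

lemma walkLen_append (x : V) : ∀ (u : List V) (w : List V),
    G.walkLen (u ++ x :: w) = G.walkLen (u ++ [x]) + G.walkLen (x :: w)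
  | [], w => by simp
  | [a], w => by simp
  | a :: b :: u, w => by
    have := walkLen_append x (b :: u) w
    simp only [List.cons_append, walkLen_cons_cons] at this ⊢
    rw [this]; ring

lemma IsWalk.split {s t x : V} {u w : List V} (h : G.IsWalk s t (u ++ x :: w)) :
    G.IsWalk s x (u ++ [x]) ∧ G.IsWalk x t (x :: w) := by
  obtain ⟨hne, hh, hl, hc⟩ := h
  have hrw : u ++ x :: w = (u ++ [x]) ++ w := by simp
  rw [hrw] at hc
  change List.IsChain G.Edge _ at hc
  rw [List.isChain_append] at hc
  obtain ⟨hc1, hc2, hc3⟩ := hc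
  refine ⟨⟨by simp, ?_, ?_, hc1⟩, ⟨by simp, rfl, ?_, ?_⟩⟩
  · cases u with
    | nil => simpa using hh
    | cons a u => simpa using hh
  · simp [List.getLast?_concat]
  · rw [← hl, List.getLast?_append_cons]
  · change List.IsChain G.Edge _
    rw [List.isChain_cons]
    refine ⟨fun y hy => ?_, hc2⟩
    exact hc3 x (by simp [List.getLast?_concat]) y hy

lemma IsWalk.append' {s t x : V} {u w : List V} (h1 : G.IsWalk s x (u ++ [x]))
    (h2 : G.IsWalk x t (x :: w)) : G.IsWalk s t (u ++ x :: w) := by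
  obtain ⟨_, hh1, hl1, hc1⟩ := h1
  obtain ⟨_, hh2, hl2, hc2⟩ := h2
  refine ⟨by simp, ?_, ?_, ?_⟩
  · cases u with
    | nil => simpa using hh1
    | cons a u => simpa using hh1
  · rw [List.getLast?_append_of_ne_nil] <;> simp [← hl2]
  · have hrw : u ++ x :: w = (u ++ [x]) ++ w := by simp
    rw [hrw]
    change List.IsChain G.Edge _
    rw [List.isChain_append]
    refine ⟨hc1, (List.isChain_cons.1 hc2).2, ?_⟩
    intro a ha b hb
    rw [List.getLast?_concat] at ha
    simp at ha; subst ha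
    exact (List.isChain_cons.1 hc2).1 b hb

end WDigraph

namespace WDigraph
variable {G : WDigraph V}

lemma splice {s x t : V} {c q : List V} (hc : G.IsWalk s x c) (hq : G.IsWalk x t q) :
    ∃ r, G.IsWalk s t r ∧ G.walkLen r = G.walkLen c + G.walkLen q := by
  have hcne := hc.1
  have hcl := hc.2.2.1
  have hqne := hq.1
  have hqh := hq.2.1
  have hql : q = x :: q.tail := by
    cases q with
    | nil => exact absurd rfl hqne
    | cons a l =>
      simp only [List.head?_cons, Option.some.injEq] at hqh
      simp [hqh]
  have hcl' : c = c.dropLast ++ [x] := by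
    have h1 : c.getLast hcne = x := by
      rw [List.getLast?_eq_getLast hcne] at hcl; exact Option.some_injective _ hcl
    rw [← h1]; exact (List.dropLast_append_getLast hcne).symm
  refine ⟨c.dropLast ++ x :: q.tail, ?_, ?_⟩
  · exact IsWalk.append' (hcl' ▸ hc) (hql ▸ hq)
  · rw [walkLen_append, ← hcl', ← hql]

lemma splice_iter {x t : V} {c q : List V} (hc : G.IsWalk x x c) (hq : G.IsWalk x t q) :
    ∀ n : ℕ, ∃ r, G.IsWalk x t r ∧ G.walkLen r = n * G.walkLen c + G.walkLen q := by
  intro n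
  induction n with
  | zero => exact ⟨q, hq, by simp⟩
  | succ n ih =>
    obtain ⟨r, hr, hlen⟩ := ih
    obtain ⟨r', hr', hlen'⟩ := splice hc hr
    exact ⟨r', hr', by rw [hlen', hlen]; push_cast; ring⟩

lemma shorten {s t : V} (p : List V) : G.IsWalk s t p →
    (∀ x ∈ p, ∀ c, G.IsWalk x x c → 0 ≤ G.walkLen c) →
    ∃ q, G.IsWalk s t q ∧ q.Nodup ∧ G.walkLen q ≤ G.walkLen p := by
  intro hw0 hyp0
  have H : ∀ n, ∀ p : List V, p.length = n → G.IsWalk s t p →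
      (∀ x ∈ p, ∀ c, G.IsWalk x x c → 0 ≤ G.walkLen c) →
      ∃ q, G.IsWalk s t q ∧ q.Nodup ∧ G.walkLen q ≤ G.walkLen p := by
    intro n
    induction n using Nat.strong_induction_on with
    | _ n ih =>
    intro p hn hw hyp
    by_cases hnd : p.Nodup
    · exact ⟨p, hw, hnd, le_refl _⟩
    · rw [List.nodup_iff_sublist] at hnd
      push_neg at hnd
      obtain ⟨x, hx⟩ := hnd
      obtain ⟨r₁, r₂, hp, hx1, hx2⟩ := List.cons_sublist_iff.1 hx
      obtain ⟨a, b, rfl⟩ := List.append_of_mem hx1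
      obtain ⟨d, e, rfl⟩ := List.append_of_mem (hx2.subset (List.mem_singleton_self x))
      have hp' : p = a ++ x :: ((b ++ d) ++ x :: e) := by simp [hp]
      subst hp'
      obtain ⟨h1, h2⟩ := IsWalk.split hw
      have h2' : G.IsWalk x t ((x :: (b ++ d)) ++ x :: e) := by simpa using h2
      obtain ⟨hcyc, h3⟩ := IsWalk.split h2'
      have hq0 : G.IsWalk s t (a ++ x :: e) := IsWalk.append' h1 h3
      have hxmem : x ∈ a ++ x :: ((b ++ d) ++ x :: e) := by simp
      have hcycnn : 0 ≤ G.walkLen (x :: (b ++ d) ++ [x]) := hyp x hxmem _ hcyc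
      have hlen : G.walkLen (a ++ x :: e) ≤ G.walkLen (a ++ x :: ((b ++ d) ++ x :: e)) := by
        rw [walkLen_append x a (b ++ d ++ x :: e), walkLen_append x a e]
        have : G.walkLen (x :: ((b ++ d) ++ x :: e)) =
            G.walkLen (x :: (b ++ d) ++ [x]) + G.walkLen (x :: e) := by
          have := walkLen_append (G := G) x (x :: (b ++ d)) e
          simpa using this
        rw [this]; linarith
      have hlt : (a ++ x :: e).length < n := by
        subst hn; simp; omega
      have hyp' : ∀ y ∈ a ++ x :: e, ∀ c, G.IsWalk y y c → 0 ≤ G.walkLen c := by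
        intro y hy
        apply hyp
        simp at hy ⊢
        tauto
      obtain ⟨q, hq, hqnd, hqle⟩ := ih _ hlt _ rfl hq0 hyp'
      exact ⟨q, hq, hqnd, le_trans hqle hlen⟩
  exact H p.length p rfl hw0 hyp0

lemma walkLen_lower (M : ℝ) (hM0 : 0 ≤ M) (hM : ∀ u v : V, -M ≤ G.len u v) :
    ∀ p : List V, -(p.length * M) ≤ G.walkLen p
  | [] => by simp
  | [a] => by simpa using hM0
  | a :: b :: l => by
    have ih := walkLen_lower M hM0 hM (b :: l)
    have h2 := hM a b
    simp only [walkLen_cons_cons, List.length_cons] at ih ⊢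
    push_cast at ih ⊢
    nlinarith


end WDigraph

/-- `d(s,t) = −∞` iff some walk from `s` to `t` visits a vertex
lying on a negative cycle.  In particular, if `G` has no negative cycle then
`d(s,t) > −∞` for all `s,t`. -/
theorem dist_eq_bot_iff {V : Type*} [Fintype V] (G : WDigraph V) :
    (∀ s t : V, G.dist s t = ⊥ ↔
      ∃ p : List V, G.IsWalk s t p ∧
        ∃ x ∈ p, ∃ c : List V, G.IsWalk x x c ∧ G.walkLen c < 0) ∧
    (¬ G.HasNegCycle → ∀ s t : V, ⊥ < G.dist s t) := by
  classical
  have main : ∀ s t : V, G.dist s t = ⊥ ↔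
      ∃ p : List V, G.IsWalk s t p ∧
        ∃ x ∈ p, ∃ c : List V, G.IsWalk x x c ∧ G.walkLen c < 0 := by
    intro s t
    constructor
    · intro hbot
      by_contra hno
      push_neg at hno
      set M : ℝ := ∑ u : V, ∑ v : V, |G.len u v| with hMdef
      have hM0 : 0 ≤ M := Finset.sum_nonneg fun u _ =>
        Finset.sum_nonneg fun v _ => abs_nonneg _
      have hM : ∀ u v : V, -M ≤ G.len u v := by
        intro u v
        have h1 : |G.len u v| ≤ M := by
          calc |G.len u v| ≤ ∑ w : V, |G.len u w| :=
                Finset.single_le_sum (f := fun w => |G.len u w|)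
                  (fun w _ => abs_nonneg _) (Finset.mem_univ v)
            _ ≤ M := Finset.single_le_sum
                (f := fun w => ∑ v : V, |G.len w v|)
                (fun w _ => Finset.sum_nonneg fun v _ => abs_nonneg _) (Finset.mem_univ u)
        have := neg_abs_le (G.len u v)
        linarith
      have hbound : ∀ y ∈ {x : EReal | ∃ p, G.IsWalk s t p ∧ x = (G.walkLen p : EReal)},
          ((-(Fintype.card V * M) : ℝ) : EReal) ≤ y := by
        rintro y ⟨p, hp, rfl⟩
        have hyp : ∀ x ∈ p, ∀ c, G.IsWalk x x c → 0 ≤ G.walkLen c := by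
          intro x hx c hc
          have := hno p hp x hx c hc
          linarith
        obtain ⟨q, hq, hnd, hle⟩ := G.shorten p hp hyp
        have h1 : -(↑q.length * M) ≤ G.walkLen q := G.walkLen_lower M hM0 hM q
        have h2 : q.length ≤ Fintype.card V := hnd.length_le_card
        have h3 : -(↑(Fintype.card V) * M) ≤ G.walkLen p := by
          have : (q.length : ℝ) ≤ (Fintype.card V : ℝ) := by exact_mod_cast h2
          nlinarith
        exact_mod_cast EReal.coe_le_coe_iff.2 h3
      have hle := le_sInf hbound
      rw [WDigraph.dist] at hbot
      rw [hbot, le_bot_iff] at hle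
      exact EReal.coe_ne_bot _ hle
    · rintro ⟨p, hp, x, hx, c, hc, hneg⟩
      rw [WDigraph.dist, sInf_eq_bot]
      intro b hb
      obtain ⟨r, -, hr⟩ := EReal.exists_between_coe_real hb
      obtain ⟨u, w, rfl⟩ := List.append_of_mem hx
      obtain ⟨h1, h2⟩ := WDigraph.IsWalk.split hp
      set A : ℝ := G.walkLen (u ++ [x]) + G.walkLen (x :: w) with hA
      have hcneg : 0 < -G.walkLen c := by linarith
      obtain ⟨n, hngt⟩ := exists_nat_gt ((A - r) / (-G.walkLen c))
      obtain ⟨q2, hq2, hq2len⟩ := G.splice_iter hc h2 n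
      obtain ⟨q, hq, hqlen⟩ := G.splice h1 hq2
      refine ⟨(G.walkLen q : EReal), ⟨q, hq, rfl⟩, lt_trans ?_ hr⟩
      rw [EReal.coe_lt_coe_iff]
      have hmul : (A - r) < n * (-G.walkLen c) := by
        rw [div_lt_iff₀ hcneg] at hngt
        linarith
      rw [hqlen, hq2len]
      rw [hA] at hmul
      linarith
  refine ⟨main, fun hnc s t => ?_⟩
  rw [bot_lt_iff_ne_bot]
  intro h
  obtain ⟨p, hp, x, hx, c, hc, hneg⟩ := (main s t).1 h
  exact hnc ⟨x, c, hc, hneg⟩
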